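/- For every unit vector ψ in ℂ², there exists a real orthogonal 2×2 matrix O (i.e., O has real entries and O·Oᵀ = I) such that O|ψ⟩⟨ψ|Oᵀ equals the canonical density matrix ρ_A = [[(1+A)/2, −(i/2)√(1−A²)], [(i/2)√(1−A²), (1−A)/2]], where A = |⟨ψ*|ψ⟩| = |ψ₀² + ψ₁²| is the modulus of the sum of squares of the components of ψ. -/

import Mathlib

open Matrix Kronecker BigOperators
open scoped ComplexOrder

noncomputable section

/-- A density matrix: positive semidefinite with trace 1. -/
def IsDensityMatrix {n : Type*} [Fintype n] [DecidableEq n] (ρ : Matrix n n ℂ) : Prop :=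
  ρ.PosSemidef ∧ ρ.trace = 1

/-- The l₁-norm imaginarity measure: sum of |Im ρᵢⱼ| over off-diagonal entries. -/
noncomputable def Fl1 {n : Type*} [Fintype n] [DecidableEq n] (ρ : Matrix n n ℂ) : ℝ :=
  ∑ i, ∑ j, if i = j then 0 else |(ρ i j).im|

/-- The trace norm ‖M‖₁ = Tr √(M†M). -/
noncomputable def traceNorm {n : Type*} [Fintype n] [DecidableEq n] (M : Matrix n n ℂ) : ℝ :=
  ((((Matrix.posSemidef_conjTranspose_mul_self M).1.eigenvectorUnitary : Matrix n n ℂ) *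
    diagonal (((↑) : ℝ → ℂ) ∘ (√·) ∘
      (Matrix.posSemidef_conjTranspose_mul_self M).1.eigenvalues) *
    (star (Matrix.posSemidef_conjTranspose_mul_self M).1.eigenvectorUnitary : Matrix n n ℂ)).trace).re

/-- The robustness of imaginarity: (1/2)‖ρ − ρᵀ‖₁. -/
noncomputable def FR {n : Type*} [Fintype n] [DecidableEq n] (ρ : Matrix n n ℂ) : ℝ :=
  traceNorm (ρ - ρᵀ) / 2

/-- Von Neumann entropy (base-2), via eigenvalues of a Hermitian matrix
(junk value 0 if not Hermitian). -/
noncomputable def vnEntropy {n : Type*} [Fintype n] [DecidableEq n] (σ : Matrix n n ℂ) : ℝ :=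
  if h : σ.IsHermitian then -∑ j, (h.eigenvalues j) * Real.logb 2 (h.eigenvalues j) else 0

/-- The relative entropy of imaginarity: S(Re ρ) − S(ρ), Re ρ = (ρ + ρᵀ)/2. -/
noncomputable def Fr {n : Type*} [Fintype n] [DecidableEq n] (ρ : Matrix n n ℂ) : ℝ :=
  vnEntropy ((1/2 : ℂ) • (ρ + ρᵀ)) - vnEntropy ρ

/-- The canonical single-qubit state ρ_A. -/
noncomputable def rhoA (A : ℝ) : Matrix (Fin 2) (Fin 2) ℂ :=
  !![(((1 + A) / 2 : ℝ) : ℂ), -(Complex.I / 2) * (Real.sqrt (1 - A ^ 2) : ℂ);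
     (Complex.I / 2) * (Real.sqrt (1 - A ^ 2) : ℂ), (((1 - A) / 2 : ℝ) : ℂ)]

/-- Density matrix of the maximal imaginary state |+⟩ = (|0⟩ + i|1⟩)/√2. -/
noncomputable def Mplus : Matrix (Fin 2) (Fin 2) ℂ :=
  (1/2 : ℂ) • !![1, -Complex.I; Complex.I, 1]

/-! Multiplying `ψ` by a unit phase `c` does not change `|ψ⟩⟨ψ|`, and `c` can be chosen so that
`χ = c ψ` has `χ ⬝ᵥ χ = A` real. Writing `χ = u + i v` with `u, v ∈ ℝ²`, this says `u ⊥ v`,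
`|u|² = (1 + A) / 2` and `|v|² = (1 - A) / 2`. A real orthogonal `O` sends `u` to `(|u|, 0)` and
`v` to `(0, |v|)`; since `O` is real, `O |χ⟩⟨χ| Oᵀ = |Oχ⟩⟨Oχ|` with
`Oχ = (√((1 + A) / 2), i √((1 - A) / 2))`, and this projector is `ρ_A`. -/

namespace Complex

theorem exists_norm_eq_one_sq_mul_eq_norm (z : ℂ) : ∃ c : ℂ, ‖c‖ = 1 ∧ c ^ 2 * z = ‖z‖ := by
  set c := exp (↑(-(arg z / 2)) * I)
  refine ⟨c, norm_exp_ofReal_mul_I _, ?_⟩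
  calc c ^ 2 * z = ‖z‖ * (c * c * exp (arg z * I)) := by
        nth_rw 1 [← norm_mul_exp_arg_mul_I z]; ring
    _ = ‖z‖ := by rw [← exp_add, ← exp_add]; push_cast; ring_nf; rw [exp_zero, mul_one]

section DotProduct

variable {n : Type*} [Fintype n]

theorem re_dotProduct_self (x : n → ℂ) :
    (x ⬝ᵥ x).re = (re ∘ x) ⬝ᵥ (re ∘ x) - (im ∘ x) ⬝ᵥ (im ∘ x) := by
  simp [dotProduct, re_sum, ← Finset.sum_sub_distrib]

theorem im_dotProduct_self (x : n → ℂ) :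
    (x ⬝ᵥ x).im = 2 * ((re ∘ x) ⬝ᵥ (im ∘ x)) := by
  simp only [dotProduct, im_sum, Finset.mul_sum, mul_im, Function.comp_apply]
  ring_nf

theorem sum_norm_sq_eq_dotProduct_re_add_im (x : n → ℂ) :
    ∑ j, ‖x j‖ ^ 2 = (re ∘ x) ⬝ᵥ (re ∘ x) + (im ∘ x) ⬝ᵥ (im ∘ x) := by
  simp [dotProduct, ← Finset.sum_add_distrib, Complex.sq_norm, normSq_apply]

theorem dotProduct_re_im_of_dotProduct_self_eq_ofReal {x : n → ℂ} {A : ℝ}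
    (hx : ∑ j, ‖x j‖ ^ 2 = 1) (hA : x ⬝ᵥ x = A) :
    (re ∘ x) ⬝ᵥ (re ∘ x) = (1 + A) / 2 ∧ (im ∘ x) ⬝ᵥ (im ∘ x) = (1 - A) / 2 ∧
      (re ∘ x) ⬝ᵥ (im ∘ x) = 0 := by
  have hre := re_dotProduct_self x
  have him := im_dotProduct_self x
  rw [hA, ofReal_re] at hre
  rw [hA, ofReal_im] at him
  rw [sum_norm_sq_eq_dotProduct_re_add_im] at hx
  exact ⟨by linarith, by linarith, by linarith⟩

end DotProduct

end Complex

namespace Matrix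

variable {k l m n α : Type*}

theorem mul_vecMulVec_mul_transpose [CommSemiring α] [Fintype m] [Fintype n]
    (M : Matrix l m α) (N : Matrix k n α) (x : m → α) (y : n → α) :
    M * vecMulVec x y * Nᵀ = vecMulVec (M *ᵥ x) (N *ᵥ y) := by
  rw [mul_vecMulVec, vecMulVec_mul, vecMul_transpose]

theorem vecMulVec_smul_star_smul {𝕜 : Type*} [RCLike 𝕜] {c : 𝕜} (hc : ‖c‖ = 1)
    (x : m → 𝕜) : vecMulVec (c • x) (star (c • x)) = vecMulVec x (star x) := by
  rw [star_smul, smul_vecMulVec, vecMulVec_smul, smul_smul, RCLike.star_def, RCLike.mul_conj,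
    hc]
  simp

theorem star_map_ofReal_mulVec [Fintype n] (R : Matrix m n ℝ) (x : n → ℂ) :
    star (R.map (↑) *ᵥ x) = R.map (↑) *ᵥ star x := by
  ext i
  simp [mulVec, dotProduct, star_sum]

theorem map_ofReal_mulVec [Fintype n] (R : Matrix m n ℝ) (x : n → ℂ) :
    R.map (↑) *ᵥ x =
      fun i => ((R *ᵥ (Complex.re ∘ x)) i : ℂ) + (R *ᵥ (Complex.im ∘ x)) i * Complex.I := by
  ext i
  simp [mulVec, dotProduct, Complex.ext_iff, Complex.re_sum, Complex.im_sum]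

theorem exists_mem_orthogonalGroup_mulVec_eq (u v : Fin 2 → ℝ) {r s : ℝ} (hr : 0 < r)
    (hu : u ⬝ᵥ u = r ^ 2) (hv : v ⬝ᵥ v = s ^ 2) (huv : u ⬝ᵥ v = 0) :
    ∃ R ∈ orthogonalGroup (Fin 2) ℝ, R *ᵥ u = ![r, 0] ∧ R *ᵥ v = ![0, s] := by
  rw [vec2_dotProduct] at hu hv huv
  -- Lagrange's identity gives `(u₀v₁ - u₁v₀)² = r²s²`; the sign `ε` makes this cross product `rs`.
  obtain ⟨ε, hε, hεD⟩ : ∃ ε : ℝ, ε ^ 2 = 1 ∧ ε * (u 0 * v 1 - u 1 * v 0) = r * s := by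
    have hD : (u 0 * v 1 - u 1 * v 0) ^ 2 = (r * s) ^ 2 := by
      linear_combination (u 0 ^ 2 + u 1 ^ 2) * hv + s ^ 2 * hu - (u 0 * v 0 + u 1 * v 1) * huv
    rcases sq_eq_sq_iff_eq_or_eq_neg.mp hD with h | h
    · exact ⟨1, by norm_num, by rw [h, one_mul]⟩
    · exact ⟨-1, by norm_num, by rw [h]; ring⟩
  refine ⟨!![u 0 / r, u 1 / r; -(ε * u 1) / r, ε * u 0 / r], ?_, ?_, ?_⟩
  · rw [mem_orthogonalGroup_iff, one_fin_two]
    ext i j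
    fin_cases i <;> fin_cases j <;>
      simp only [mul_apply, transpose_apply, Fin.sum_univ_two, of_apply, cons_val', cons_val_zero,
        cons_val_one, cons_val_fin_one, Fin.zero_eta, Fin.mk_one, Fin.isValue] <;>
      field_simp
    · linear_combination hu
    · ring
    · ring
    · linear_combination (u 0 ^ 2 + u 1 ^ 2) * hε + hu
  · ext i
    fin_cases i <;>
      simp only [mulVec, vec2_dotProduct, of_apply, cons_val', cons_val_zero, cons_val_one,
        cons_val_fin_one, Fin.zero_eta, Fin.mk_one, Fin.isValue] <;>
      field_simp
    · linear_combination hu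
    · ring
  · ext i
    fin_cases i <;>
      simp only [mulVec, vec2_dotProduct, of_apply, cons_val', cons_val_zero, cons_val_one,
        cons_val_fin_one, Fin.zero_eta, Fin.mk_one, Fin.isValue] <;>
      field_simp
    · linear_combination huv
    · linear_combination hεD

end Matrix

theorem rhoA_eq_vecMulVec {A r s : ℝ} (hr : 0 ≤ r) (hs : 0 ≤ s) (hr2 : r ^ 2 = (1 + A) / 2)
    (hs2 : s ^ 2 = (1 - A) / 2) :
    rhoA A = vecMulVec ![(r : ℂ), s * Complex.I] (star ![(r : ℂ), s * Complex.I]) := by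
  have hsqrt : √(1 - A ^ 2) = 2 * (r * s) := by
    rw [show 1 - A ^ 2 = (2 * (r * s)) ^ 2 by
        linear_combination (-4 * r ^ 2) * hs2 - 2 * (1 - A) * hr2,
      Real.sqrt_sq (by positivity)]
  rw [rhoA, ← hr2, ← hs2, hsqrt]
  ext i j
  fin_cases i <;> fin_cases j <;>
    simp only [Complex.ofReal_pow, Complex.ofReal_mul, Complex.ofReal_ofNat, neg_mul, mul_neg,
      of_apply, cons_val', cons_val_zero, cons_val_one, cons_val_fin_one, vecMulVec_apply,
      Pi.star_apply, star_mul', RCLike.star_def, Complex.conj_ofReal, Complex.conj_I,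
      Fin.zero_eta, Fin.mk_one, Fin.isValue]
  · ring
  · ring
  · ring
  · linear_combination (s : ℂ) ^ 2 * Complex.I_sq

/-- every unit vector ψ ∈ ℂ² can be brought to the canonical form ρ_A,
A = |ψ₀² + ψ₁²|, by conjugation with a real orthogonal matrix. -/
theorem exists_real_orthogonal_to_canonical (ψ : Fin 2 → ℂ)
    (hψ : ∑ j, ‖ψ j‖ ^ 2 = 1) :
    ∃ O : Matrix (Fin 2) (Fin 2) ℂ,
      (∀ i j, (O i j).im = 0) ∧ O * Oᵀ = 1 ∧
      O * (Matrix.of fun i j => ψ i * (starRingEnd ℂ) (ψ j)) * Oᵀ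
        = rhoA ‖ψ 0 ^ 2 + ψ 1 ^ 2‖ := by
  set A : ℝ := ‖ψ 0 ^ 2 + ψ 1 ^ 2‖
  obtain ⟨c, hc, hcA⟩ := Complex.exists_norm_eq_one_sq_mul_eq_norm (ψ 0 ^ 2 + ψ 1 ^ 2)
  set χ := c • ψ
  have hχ : χ ⬝ᵥ χ = A := by
    simp only [χ, dotProduct, Fin.sum_univ_two, Pi.smul_apply, smul_eq_mul]
    linear_combination hcA
  have hχ1 : ∑ j, ‖χ j‖ ^ 2 = 1 := by simp [χ, hc, hψ]
  obtain ⟨hu, hv, huv⟩ := Complex.dotProduct_re_im_of_dotProduct_self_eq_ofReal hχ1 hχ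
  set r := √((1 + A) / 2)
  set s := √((1 - A) / 2)
  have hr2 : r ^ 2 = (1 + A) / 2 := Real.sq_sqrt (by positivity)
  have hs2 : s ^ 2 = (1 - A) / 2 :=
    Real.sq_sqrt (hv ▸ Finset.sum_nonneg fun _ _ => mul_self_nonneg _)
  obtain ⟨R, hR, hRu, hRv⟩ := Matrix.exists_mem_orthogonalGroup_mulVec_eq (Complex.re ∘ χ)
    (Complex.im ∘ χ) (by positivity) (hu.trans hr2.symm) (hv.trans hs2.symm) huv
  have hRχ : R.map (↑) *ᵥ χ = ![(r : ℂ), s * Complex.I] := by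
    rw [map_ofReal_mulVec, hRu, hRv]
    ext i
    fin_cases i <;> simp
  refine ⟨R.map (↑), fun i j => Complex.ofReal_im _, ?_, ?_⟩
  · change R.map Complex.ofRealHom * (R.map Complex.ofRealHom)ᵀ = 1
    rw [← transpose_map, ← Matrix.map_mul, (mem_orthogonalGroup_iff _ _).mp hR,
      Matrix.map_one _ (map_zero _) (map_one _)]
  · change R.map _ * vecMulVec ψ (star ψ) * _ = _
    rw [← vecMulVec_smul_star_smul hc, mul_vecMulVec_mul_transpose, ← star_map_ofReal_mulVec, hRχ,
      rhoA_eq_vecMulVec (Real.sqrt_nonneg _) (Real.sqrt_nonneg _) hr2 hs2]
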